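/- Let f : Y → X be a quasifinite morphism of finite type between locally noetherian schemes. Then for every closed subset Z ⊂ Y, one has codim(f(Z), X) ≥ codim(Z, Y). -/

import Mathlib

open CategoryTheory AlgebraicGeometry TopologicalSpace Opposite

universe u

/-- The codimension of a set of points of a scheme: the infimum over `z ∈ Z` of the
Krull dimension of the local ring at `z`. -/
noncomputable def setCodim (X : Scheme.{u}) (Z : Set X) : WithBot ℕ∞ :=
  ⨅ z ∈ Z, ringKrullDim (X.presheaf.stalk z)

/-!
A morphism locally of finite type with finite fibres is locally quasi-finite, so each stalk map
`𝒪_{X, f z} → 𝒪_{Y, z}` is quasi-finite. Quasi-finite algebras have discrete fibres on spectra,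
hence satisfy incomparability: a strict chain of primes of `𝒪_{Y, z}` contracts to a strict chain
of `𝒪_{X, f z}`. Thus `dim 𝒪_{Y, z} ≤ dim 𝒪_{X, f z}`, and taking infima over `Z` gives the claim.
-/

lemma Algebra.QuasiFinite.strictMono_comap {R S : Type*} [CommRing R] [CommRing S] [Algebra R S]
    [Algebra.QuasiFinite R S] : StrictMono (PrimeSpectrum.comap (algebraMap R S)) := by
  intro P Q hPQ
  refine lt_of_le_of_ne (Ideal.comap_mono hPQ.le) fun h ↦ hPQ.ne ?_
  exact PrimeSpectrum.ext (eq_of_le_of_under_eq (R := R) P.asIdeal Q.asIdeal hPQ.le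
    congr(($h).asIdeal))

lemma Algebra.QuasiFinite.ringKrullDim_le {R S : Type*} [CommRing R] [CommRing S] [Algebra R S]
    [Algebra.QuasiFinite R S] : ringKrullDim S ≤ ringKrullDim R :=
  Order.krullDim_le_of_strictMono _ strictMono_comap

lemma RingHom.QuasiFinite.ringKrullDim_le {R S : Type*} [CommRing R] [CommRing S] {f : R →+* S}
    (hf : f.QuasiFinite) : ringKrullDim S ≤ ringKrullDim R := by
  algebraize [f]
  exact Algebra.QuasiFinite.ringKrullDim_le

lemma AlgebraicGeometry.Scheme.Hom.QuasiFiniteAt.ringKrullDim_stalk_le {X Y : Scheme} {f : Y ⟶ X}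
    {y : Y} (hy : f.QuasiFiniteAt y) :
    ringKrullDim (Y.presheaf.stalk y) ≤ ringKrullDim (X.presheaf.stalk (f y)) :=
  RingHom.QuasiFinite.ringKrullDim_le hy

theorem codim_image_ge_of_quasifinite_general {Y X : Scheme.{u}}
    (f : Y ⟶ X) [LocallyOfFiniteType f]
    (hqf : ∀ x : X, (f.base ⁻¹' {x}).Finite)
    (Z : Set Y) :
    setCodim Y Z ≤ setCodim X (f.base '' Z) := by
  have := LocallyQuasiFinite.of_finite_preimage_singleton f hqf
  refine le_iInf₂ ?_
  rintro _ ⟨z, hz, rfl⟩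
  exact (iInf₂_le z hz).trans (f.quasiFiniteAt z).ringKrullDim_stalk_le

/-- For a quasifinite morphism of finite type between locally noetherian schemes,
the codimension of the image of a closed subset is at least the codimension of
the subset: `codim(f(Z), X) ≥ codim(Z, Y)`. -/
theorem codim_image_ge_of_quasifinite {Y X : Scheme.{u}}
    [IsLocallyNoetherian X] [IsLocallyNoetherian Y]
    (f : Y ⟶ X) [LocallyOfFiniteType f]
    (hqf : ∀ x : X, (f.base ⁻¹' {x}).Finite)
    (Z : Set Y) (hZ : IsClosed Z) :
    setCodim Y Z ≤ setCodim X (f.base '' Z) :=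
  codim_image_ge_of_quasifinite_general f hqf Z
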